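/- Fitted policy evaluation offline Bellman residual bound: Let π be a policy of a finite discounted MDP, ν a probability distribution on S×A, λ > 0, ε ≥ 0, ε_be ∈ [0, 2/(1−γ)], and D ≥ 0. Let f_prev, f : S×A → [0, 1/(1−γ)] and suppose there exists g : S×A → [0, 1/(1−γ)] with |g(s,a) − (T^π f_prev)(s,a)| ≤ ε_be for all (s,a) such that the regression oracle inequality E_{ν}[(f − T^π f_prev)²] + λ·E_{d^π}[(f − Q^π)²] ≤ E_{ν}[(g − T^π f_prev)²] + λ·E_{d^π}[(g − Q^π)²] + ε holds, and suppose E_{d^π}[(f_prev − Q^π)²] ≤ D. Then E_{(s,a)∼ν}[(f(s,a) − (T^π f_prev)(s,a))²] ≤ λ·(4·ε_be/(1−γ) + γ·D) + 2·ε_be/(1−γ) + ε. -/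

import Mathlib

/-! The oracle inequality compares `f` with the near-target `g`: the `ν`-residual of `f` is at most
that of `g`, which is `≤ εbe² ≤ 2 εbe / (1 - γ)`, plus `λ E_{d^π}[(g - Q^π)²] + ε`. Split
`g - Q^π = (g - T^π f_prev) + (T^π f_prev - T^π Q^π)`: the first part is at most `εbe` and the second
at most `1 / (1 - γ)` pointwise. For the square of the second part, Jensen's inequality for the
transition `(s, a) ↦ (s', a')` together with the flow inequality `γ d^π P^π ≤ d^π` of the occupancy
measure gives `E_{d^π}[(T^π f_prev - T^π Q^π)²] ≤ γ E_{d^π}[(f_prev - Q^π)²] ≤ γ D`. -/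

open Finset

structure FinMDP (S A : Type*) [Fintype S] [Fintype A] where
  P : S → A → S → ℝ
  P_nonneg : ∀ s a s', 0 ≤ P s a s'
  P_sum : ∀ s a, ∑ s', P s a s' = 1
  r : S → A → ℝ
  r_nonneg : ∀ s a, 0 ≤ r s a
  r_le_one : ∀ s a, r s a ≤ 1
  disc : ℝ
  disc_pos : 0 < disc
  disc_lt_one : disc < 1
  init : S → ℝ
  init_nonneg : ∀ s, 0 ≤ init s
  init_sum : ∑ s, init s = 1

variable {S A : Type*} [Fintype S] [Fintype A] [Nonempty S] [Nonempty A]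

/-- A policy assigns to each state a probability mass function over actions. -/
def IsPolicy (π : S → A → ℝ) : Prop :=
  (∀ s a, 0 ≤ π s a) ∧ ∀ s, ∑ a, π s a = 1

/-- The Bellman operator `T^π`. -/
noncomputable def FinMDP.bellman (M : FinMDP S A) (π f : S → A → ℝ) (s : S) (a : A) : ℝ :=
  M.r s a + M.disc * ∑ s', M.P s a s' * ∑ a', π s' a' * f s' a'

/-- `Q` is the action-value function of `π`, i.e. satisfies the Bellman equation. -/
def FinMDP.IsQ (M : FinMDP S A) (π Q : S → A → ℝ) : Prop :=
  ∀ s a, Q s a = M.bellman π Q s a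

/-- The state value `V^π(s)` induced by a `Q`-function. -/
noncomputable def vOf (π Q : S → A → ℝ) (s : S) : ℝ := ∑ a, π s a * Q s a

/-- The scalar value `V^π = E_{s ∼ μ₀}[V^π(s)]`. -/
noncomputable def FinMDP.scalarV (M : FinMDP S A) (π Q : S → A → ℝ) : ℝ :=
  ∑ s, M.init s * vOf π Q s

/-- Distribution of the state at time `t` under policy `π`. -/
noncomputable def FinMDP.stateDist (M : FinMDP S A) (π : S → A → ℝ) : ℕ → S → ℝ
  | 0 => M.init
  | (t + 1) => fun s' => ∑ s, ∑ a, FinMDP.stateDist M π t s * π s a * M.P s a s'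

/-- The discounted occupancy measure `d^π(s,a) = (1-γ) ∑_t γ^t Pr^π(s_t = s, a_t = a)`. -/
noncomputable def FinMDP.occ (M : FinMDP S A) (π : S → A → ℝ) (s : S) (a : A) : ℝ :=
  (1 - M.disc) * ∑' t : ℕ, M.disc ^ t * M.stateDist π t s * π s a

section WeightedSums

variable {ι : Type*} [Fintype ι] {w x : ι → ℝ} {c : ℝ}

lemma weighted_sum_le (hw0 : ∀ i, 0 ≤ w i) (hw1 : ∑ i, w i = 1) (hx : ∀ i, x i ≤ c) :
    ∑ i, w i * x i ≤ c :=
  calc ∑ i, w i * x i ≤ ∑ i, w i * c :=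
        sum_le_sum fun i _ => mul_le_mul_of_nonneg_left (hx i) (hw0 i)
    _ = c := by rw [← sum_mul, hw1, one_mul]

lemma le_weighted_sum (hw0 : ∀ i, 0 ≤ w i) (hw1 : ∑ i, w i = 1) (hx : ∀ i, c ≤ x i) :
    c ≤ ∑ i, w i * x i := by
  have := weighted_sum_le (x := fun i => -x i) hw0 hw1 fun i => neg_le_neg (hx i)
  simpa only [mul_neg, sum_neg_distrib, neg_le_neg_iff] using this

lemma abs_weighted_sum_le (hw0 : ∀ i, 0 ≤ w i) (hw1 : ∑ i, w i = 1) (hx : ∀ i, |x i| ≤ c) :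
    |∑ i, w i * x i| ≤ c :=
  abs_le.2 ⟨le_weighted_sum hw0 hw1 fun i => (abs_le.1 (hx i)).1,
    weighted_sum_le hw0 hw1 fun i => (abs_le.1 (hx i)).2⟩

lemma sq_weighted_sum_le (hw0 : ∀ i, 0 ≤ w i) (hw1 : ∑ i, w i = 1) :
    (∑ i, w i * x i) ^ 2 ≤ ∑ i, w i * x i ^ 2 := by
  simpa only [smul_eq_mul] using (even_two.convexOn_pow (𝕜 := ℝ)).map_sum_le
    (t := univ) (fun i _ => hw0 i) hw1 fun i _ => Set.mem_univ (x i)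

end WeightedSums

lemma sum_sum_mul_le_add {S A : Type*} [Fintype S] [Fintype A] {w x y : S → A → ℝ} {c : ℝ}
    (hw0 : ∀ s a, 0 ≤ w s a) (hw1 : ∑ s, ∑ a, w s a = 1) (hxy : ∀ s a, x s a ≤ c + y s a) :
    ∑ s, ∑ a, w s a * x s a ≤ c + ∑ s, ∑ a, w s a * y s a :=
  calc ∑ s, ∑ a, w s a * x s a ≤ ∑ s, ∑ a, w s a * (c + y s a) :=
        sum_le_sum fun s _ => sum_le_sum fun a _ => mul_le_mul_of_nonneg_left (hxy s a) (hw0 s a)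
    _ = c + ∑ s, ∑ a, w s a * y s a := by
        simp only [mul_add, sum_add_distrib, ← sum_mul, hw1, one_mul]

lemma sq_le_of_abs_le {u e δ : ℝ} (hu : |u| ≤ e) (he : e ≤ 2 / δ) : u ^ 2 ≤ 2 * e / δ :=
  calc u ^ 2 ≤ e ^ 2 := sq_le_sq' (abs_le.1 hu).1 (abs_le.1 hu).2
    _ ≤ e * (2 / δ) := by rw [sq]; exact mul_le_mul_of_nonneg_left he ((abs_nonneg u).trans hu)
    _ = 2 * e / δ := by ring

lemma sq_add_le_of_abs_le {u v e δ : ℝ} (hu : |u| ≤ e) (hv : |v| ≤ 1 / δ) (he : e ≤ 2 / δ) :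
    (u + v) ^ 2 ≤ 4 * e / δ + v ^ 2 := by
  have huv : u * v ≤ e * (1 / δ) :=
    calc u * v ≤ |u| * |v| := by rw [← abs_mul]; exact le_abs_self _
      _ ≤ e * (1 / δ) := mul_le_mul hu hv (abs_nonneg v) ((abs_nonneg u).trans hu)
  have hu2 := sq_le_of_abs_le hu he
  calc (u + v) ^ 2 = u ^ 2 + 2 * (u * v) + v ^ 2 := by ring
    _ ≤ 2 * e / δ + 2 * (e * (1 / δ)) + v ^ 2 := by gcongr
    _ = 4 * e / δ + v ^ 2 := by ring

namespace FinMDP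

variable {S A : Type*} [Fintype S] [Fintype A] (M : FinMDP S A)

/-- `E[h(s', a')]` for `s' ∼ P(·|s,a)`, `a' ∼ π(·|s')`. -/
noncomputable def nextExp (π h : S → A → ℝ) (s : S) (a : A) : ℝ :=
  ∑ s', M.P s a s' * ∑ a', π s' a' * h s' a'

/-- `E^π[h(s_t, a_t)]`. -/
noncomputable def expectAt (π : S → A → ℝ) (t : ℕ) (h : S → A → ℝ) : ℝ :=
  ∑ s, M.stateDist π t s * ∑ a, π s a * h s a

variable {π : S → A → ℝ}

lemma bellman_eq (π f : S → A → ℝ) (s : S) (a : A) :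
    M.bellman π f s a = M.r s a + M.disc * M.nextExp π f s a := rfl

lemma bellman_sub_bellman (π f₁ f₂ : S → A → ℝ) (s : S) (a : A) :
    M.bellman π f₁ s a - M.bellman π f₂ s a = M.disc * M.nextExp π (f₁ - f₂) s a := by
  simp only [bellman_eq, nextExp, Pi.sub_apply, mul_sub, sum_sub_distrib]
  ring

lemma nextExp_le (hπ : IsPolicy π) {h : S → A → ℝ} {c : ℝ} (hc : ∀ s a, h s a ≤ c)
    (s : S) (a : A) : M.nextExp π h s a ≤ c :=
  weighted_sum_le (M.P_nonneg s a) (M.P_sum s a) fun s' =>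
    weighted_sum_le (hπ.1 s') (hπ.2 s') (hc s')

lemma le_nextExp (hπ : IsPolicy π) {h : S → A → ℝ} {c : ℝ} (hc : ∀ s a, c ≤ h s a)
    (s : S) (a : A) : c ≤ M.nextExp π h s a :=
  le_weighted_sum (M.P_nonneg s a) (M.P_sum s a) fun s' =>
    le_weighted_sum (hπ.1 s') (hπ.2 s') (hc s')

lemma abs_nextExp_le (hπ : IsPolicy π) {h : S → A → ℝ} {c : ℝ} (hc : ∀ s a, |h s a| ≤ c)
    (s : S) (a : A) : |M.nextExp π h s a| ≤ c :=
  abs_weighted_sum_le (M.P_nonneg s a) (M.P_sum s a) fun s' =>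
    abs_weighted_sum_le (hπ.1 s') (hπ.2 s') (hc s')

lemma sq_nextExp_le (hπ : IsPolicy π) (h : S → A → ℝ) (s : S) (a : A) :
    M.nextExp π h s a ^ 2 ≤ M.nextExp π (fun s' a' => h s' a' ^ 2) s a :=
  (sq_weighted_sum_le (M.P_nonneg s a) (M.P_sum s a)).trans <| sum_le_sum fun s' _ =>
    mul_le_mul_of_nonneg_left (sq_weighted_sum_le (hπ.1 s') (hπ.2 s')) (M.P_nonneg s a s')

lemma abs_bellman_sub_bellman_le (hπ : IsPolicy π) {f₁ f₂ : S → A → ℝ} {c : ℝ}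
    (hc : ∀ s a, |f₁ s a - f₂ s a| ≤ c) (s : S) (a : A) :
    |M.bellman π f₁ s a - M.bellman π f₂ s a| ≤ M.disc * c := by
  rw [bellman_sub_bellman, abs_mul, abs_of_pos M.disc_pos]
  exact mul_le_mul_of_nonneg_left (M.abs_nextExp_le hπ hc s a) M.disc_pos.le

lemma expectAt_succ (π : S → A → ℝ) (t : ℕ) (h : S → A → ℝ) :
    M.expectAt π (t + 1) h = M.expectAt π t (M.nextExp π h) := by
  let V : S → ℝ := fun s' => ∑ a', π s' a' * h s' a'
  change ∑ s', M.stateDist π (t + 1) s' * V s'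
    = ∑ s, M.stateDist π t s * ∑ a, π s a * ∑ s', M.P s a s' * V s'
  simp only [stateDist, Finset.sum_mul, Finset.mul_sum]
  rw [Finset.sum_comm]
  refine sum_congr rfl fun s _ => ?_
  rw [Finset.sum_comm]
  exact sum_congr rfl fun a _ => sum_congr rfl fun s' _ => by ring

lemma stateDist_nonneg (hπ : IsPolicy π) (t : ℕ) (s : S) : 0 ≤ M.stateDist π t s := by
  induction t generalizing s with
  | zero => exact M.init_nonneg s
  | succ t ih =>
    exact sum_nonneg fun s' _ => sum_nonneg fun a _ =>
      mul_nonneg (mul_nonneg (ih s') (hπ.1 s' a)) (M.P_nonneg s' a s)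

lemma sum_stateDist (hπ : IsPolicy π) (t : ℕ) : ∑ s, M.stateDist π t s = 1 := by
  have hone : ∀ t, M.expectAt π t (fun _ _ => 1) = ∑ s, M.stateDist π t s := fun t => by
    simp [expectAt, hπ.2]
  have hnext : M.nextExp π (fun _ _ => 1) = fun _ _ => 1 := by
    ext s a
    simp [nextExp, hπ.2, M.P_sum]
  induction t with
  | zero => exact M.init_sum
  | succ t ih => rw [← hone, expectAt_succ, hnext, hone, ih]

lemma expectAt_nonneg (hπ : IsPolicy π) (t : ℕ) {h : S → A → ℝ} (hh : ∀ s a, 0 ≤ h s a) :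
    0 ≤ M.expectAt π t h :=
  sum_nonneg fun s _ => mul_nonneg (M.stateDist_nonneg hπ t s) <|
    sum_nonneg fun a _ => mul_nonneg (hπ.1 s a) (hh s a)

lemma summable_disc_pow_mul_stateDist (hπ : IsPolicy π) (s : S) :
    Summable fun t => M.disc ^ t * M.stateDist π t s :=
  (summable_geometric_of_lt_one M.disc_pos.le M.disc_lt_one).of_nonneg_of_le
    (fun t => mul_nonneg (pow_nonneg M.disc_pos.le t) (M.stateDist_nonneg hπ t s))
    fun t => mul_le_of_le_one_right (pow_nonneg M.disc_pos.le t) <|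
      (single_le_sum (fun s' _ => M.stateDist_nonneg hπ t s') (mem_univ s)).trans
        (M.sum_stateDist hπ t).le

lemma occ_eq (π : S → A → ℝ) (s : S) (a : A) :
    M.occ π s a = (1 - M.disc) * (∑' t, M.disc ^ t * M.stateDist π t s) * π s a := by
  rw [FinMDP.occ, tsum_mul_right, mul_assoc]

lemma hasSum_expectAt (hπ : IsPolicy π) (h : S → A → ℝ) :
    HasSum (fun t => (1 - M.disc) * (M.disc ^ t * M.expectAt π t h))
      (∑ s, ∑ a, M.occ π s a * h s a) := by
  have hsa : ∀ s a, HasSum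
      (fun t => (1 - M.disc) * (M.disc ^ t * M.stateDist π t s) * π s a * h s a)
      (M.occ π s a * h s a) := fun s a => by
    rw [occ_eq]
    exact (((M.summable_disc_pow_mul_stateDist hπ s).hasSum.mul_left (1 - M.disc)).mul_right
      (π s a)).mul_right (h s a)
  convert hasSum_sum fun s _ => hasSum_sum fun a _ => hsa s a using 1
  funext t
  simp only [expectAt, mul_sum]
  exact sum_congr rfl fun s _ => sum_congr rfl fun a _ => by ring

lemma occ_nonneg (hπ : IsPolicy π) (s : S) (a : A) : 0 ≤ M.occ π s a :=
  mul_nonneg (sub_nonneg.2 M.disc_lt_one.le) <| tsum_nonneg fun t =>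
    mul_nonneg (mul_nonneg (pow_nonneg M.disc_pos.le t) (M.stateDist_nonneg hπ t s)) (hπ.1 s a)

lemma sum_occ (hπ : IsPolicy π) : ∑ s, ∑ a, M.occ π s a = 1 := by
  have hexp : ∀ t, M.expectAt π t (fun _ _ => 1) = 1 := fun t => by
    simp [expectAt, hπ.2, M.sum_stateDist hπ t]
  have hgeom := (hasSum_geometric_of_lt_one M.disc_pos.le M.disc_lt_one).mul_left (1 - M.disc)
  rw [mul_inv_cancel₀ (sub_ne_zero.2 M.disc_lt_one.ne')] at hgeom
  have := M.hasSum_expectAt hπ fun _ _ => 1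
  simp only [hexp, mul_one] at this
  exact this.unique hgeom

lemma disc_mul_sum_occ_mul_nextExp_le (hπ : IsPolicy π) {h : S → A → ℝ}
    (hh : ∀ s a, 0 ≤ h s a) :
    M.disc * ∑ s, ∑ a, M.occ π s a * M.nextExp π h s a ≤ ∑ s, ∑ a, M.occ π s a * h s a := by
  -- by `expectAt_succ`, the series of the left side is the tail `t ≥ 1` of that of the right side
  have hshift := (hasSum_nat_add_iff' 1).2 (M.hasSum_expectAt hπ h)
  have hnext := (M.hasSum_expectAt hπ (M.nextExp π h)).mul_left M.disc
  have : M.disc * ∑ s, ∑ a, M.occ π s a * M.nextExp π h s a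
      = ∑ s, ∑ a, M.occ π s a * h s a - (1 - M.disc) * M.expectAt π 0 h := by
    refine hnext.unique (hshift.congr_fun fun t => ?_) |>.trans (by simp)
    simp only [expectAt_succ, pow_succ]
    ring
  rw [this, sub_le_self_iff]
  exact mul_nonneg (sub_nonneg.2 M.disc_lt_one.le) (M.expectAt_nonneg hπ 0 hh)

lemma sum_occ_mul_sq_bellman_sub_le (hπ : IsPolicy π) (f₁ f₂ : S → A → ℝ) :
    ∑ s, ∑ a, M.occ π s a * (M.bellman π f₁ s a - M.bellman π f₂ s a) ^ 2
      ≤ M.disc * ∑ s, ∑ a, M.occ π s a * (f₁ s a - f₂ s a) ^ 2 := by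
  set h : S → A → ℝ := fun s a => (f₁ s a - f₂ s a) ^ 2
  have hpoint : ∀ s a,
      (M.bellman π f₁ s a - M.bellman π f₂ s a) ^ 2 ≤ M.disc ^ 2 * M.nextExp π h s a :=
    fun s a => by
      rw [bellman_sub_bellman, mul_pow]
      exact mul_le_mul_of_nonneg_left (M.sq_nextExp_le hπ _ s a) (sq_nonneg _)
  calc ∑ s, ∑ a, M.occ π s a * (M.bellman π f₁ s a - M.bellman π f₂ s a) ^ 2
      ≤ ∑ s, ∑ a, M.occ π s a * (M.disc ^ 2 * M.nextExp π h s a) :=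
        sum_le_sum fun s _ => sum_le_sum fun a _ =>
          mul_le_mul_of_nonneg_left (hpoint s a) (M.occ_nonneg hπ s a)
    _ = M.disc * (M.disc * ∑ s, ∑ a, M.occ π s a * M.nextExp π h s a) := by
        simp only [Finset.mul_sum]
        exact sum_congr rfl fun s _ => sum_congr rfl fun a _ => by ring
    _ ≤ M.disc * ∑ s, ∑ a, M.occ π s a * h s a :=
        mul_le_mul_of_nonneg_left
          (M.disc_mul_sum_occ_mul_nextExp_le hπ fun s a => sq_nonneg _) M.disc_pos.le

lemma IsQ.mem_Icc [Nonempty S] [Nonempty A] (hπ : IsPolicy π) {Q : S → A → ℝ} (hQ : M.IsQ π Q)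
    (s : S) (a : A) : Q s a ∈ Set.Icc 0 (1 / (1 - M.disc)) := by
  have hγ : 0 < 1 - M.disc := sub_pos.2 M.disc_lt_one
  obtain ⟨p, -, hp⟩ := exists_max_image univ (fun p : S × A => Q p.1 p.2) univ_nonempty
  obtain ⟨q, -, hq⟩ := exists_min_image univ (fun p : S × A => Q p.1 p.2) univ_nonempty
  have hmax : Q p.1 p.2 ≤ 1 + M.disc * Q p.1 p.2 :=
    calc Q p.1 p.2 = M.r p.1 p.2 + M.disc * M.nextExp π Q p.1 p.2 := hQ p.1 p.2
      _ ≤ 1 + M.disc * Q p.1 p.2 := add_le_add (M.r_le_one _ _) <| mul_le_mul_of_nonneg_left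
          (M.nextExp_le hπ (fun s a => hp (s, a) (mem_univ _)) _ _) M.disc_pos.le
  have hmin : M.disc * Q q.1 q.2 ≤ Q q.1 q.2 :=
    calc M.disc * Q q.1 q.2 ≤ M.r q.1 q.2 + M.disc * M.nextExp π Q q.1 q.2 :=
          le_add_of_nonneg_of_le (M.r_nonneg _ _) <| mul_le_mul_of_nonneg_left
            (M.le_nextExp hπ (fun s a => hq (s, a) (mem_univ _)) _ _) M.disc_pos.le
      _ = Q q.1 q.2 := (hQ q.1 q.2).symm
  constructor
  · exact (nonneg_of_mul_nonneg_right (by linarith) hγ).trans (hq (s, a) (mem_univ _))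
  · exact (hp (s, a) (mem_univ _)).trans <| by rw [le_div_iff₀ hγ]; linarith

lemma IsQ.abs_bellman_sub_le [Nonempty S] [Nonempty A] (hπ : IsPolicy π) {Q : S → A → ℝ}
    (hQ : M.IsQ π Q) {f : S → A → ℝ} (hf : ∀ s a, f s a ∈ Set.Icc 0 (1 / (1 - M.disc)))
    (s : S) (a : A) : |M.bellman π f s a - Q s a| ≤ 1 / (1 - M.disc) := by
  rw [hQ s a]
  refine (M.abs_bellman_sub_bellman_le hπ (fun s a => ?_) s a).trans
    (mul_le_of_le_one_left ((hf s a).1.trans (hf s a).2) M.disc_lt_one.le)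
  exact abs_sub_le_of_nonneg_of_le (hf s a).1 (hf s a).2
    (IsQ.mem_Icc M hπ hQ s a).1 (IsQ.mem_Icc M hπ hQ s a).2

lemma IsQ.sum_occ_mul_sq_sub_le [Nonempty S] [Nonempty A] (hπ : IsPolicy π) {Q : S → A → ℝ}
    (hQ : M.IsQ π Q) {f g : S → A → ℝ} {e : ℝ}
    (hf : ∀ s a, f s a ∈ Set.Icc 0 (1 / (1 - M.disc)))
    (hg : ∀ s a, |g s a - M.bellman π f s a| ≤ e) (he : e ≤ 2 / (1 - M.disc)) :
    ∑ s, ∑ a, M.occ π s a * (g s a - Q s a) ^ 2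
      ≤ 4 * e / (1 - M.disc) + M.disc * ∑ s, ∑ a, M.occ π s a * (f s a - Q s a) ^ 2 := by
  have hfix : ∀ s a, M.bellman π f s a - Q s a = M.bellman π f s a - M.bellman π Q s a :=
    fun s a => by rw [← hQ s a]
  calc ∑ s, ∑ a, M.occ π s a * (g s a - Q s a) ^ 2
      ≤ 4 * e / (1 - M.disc) + ∑ s, ∑ a, M.occ π s a * (M.bellman π f s a - Q s a) ^ 2 :=
        sum_sum_mul_le_add (M.occ_nonneg hπ) (M.sum_occ hπ) fun s a => by
          simpa using sq_add_le_of_abs_le (hg s a) (IsQ.abs_bellman_sub_le M hπ hQ hf s a) he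
    _ ≤ 4 * e / (1 - M.disc) + M.disc * ∑ s, ∑ a, M.occ π s a * (f s a - Q s a) ^ 2 := by
        simp only [hfix]
        exact add_le_add_right (M.sum_occ_mul_sq_bellman_sub_le hπ f Q) _

end FinMDP

theorem stmt13_general (M : FinMDP S A) (π Q : S → A → ℝ) (hπ : IsPolicy π) (hQ : M.IsQ π Q)
    (ν : S → A → ℝ) (hν0 : ∀ s a, 0 ≤ ν s a) (hν1 : ∑ s, ∑ a, ν s a = 1)
    (lam ε εbe D : ℝ) (hlam : 0 < lam)
    (hεbe1 : εbe ≤ 2 / (1 - M.disc))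
    (fprev f : S → A → ℝ)
    (hfprevmem : ∀ s a, fprev s a ∈ Set.Icc 0 (1 / (1 - M.disc)))
    (horacle : ∃ g : S → A → ℝ,
      (∀ s a, g s a ∈ Set.Icc 0 (1 / (1 - M.disc))) ∧
      (∀ s a, |g s a - M.bellman π fprev s a| ≤ εbe) ∧
      ((∑ s, ∑ a, ν s a * (f s a - M.bellman π fprev s a) ^ 2)
          + lam * ∑ s, ∑ a, M.occ π s a * (f s a - Q s a) ^ 2
        ≤ (∑ s, ∑ a, ν s a * (g s a - M.bellman π fprev s a) ^ 2)
          + lam * (∑ s, ∑ a, M.occ π s a * (g s a - Q s a) ^ 2) + ε))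
    (hprev : ∑ s, ∑ a, M.occ π s a * (fprev s a - Q s a) ^ 2 ≤ D) :
    ∑ s, ∑ a, ν s a * (f s a - M.bellman π fprev s a) ^ 2
      ≤ lam * (4 * εbe / (1 - M.disc) + M.disc * D) + 2 * εbe / (1 - M.disc) + ε := by
  obtain ⟨g, -, hgT, horacle⟩ := horacle
  have hν : ∑ s, ∑ a, ν s a * (g s a - M.bellman π fprev s a) ^ 2 ≤ 2 * εbe / (1 - M.disc) := by
    simpa using sum_sum_mul_le_add (y := 0) hν0 hν1 fun s a => by
      simpa using sq_le_of_abs_le (hgT s a) hεbe1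
  have hocc : ∑ s, ∑ a, M.occ π s a * (g s a - Q s a) ^ 2
      ≤ 4 * εbe / (1 - M.disc) + M.disc * D :=
    (FinMDP.IsQ.sum_occ_mul_sq_sub_le M hπ hQ hfprevmem hgT hεbe1).trans <|
      add_le_add_right (mul_le_mul_of_nonneg_left hprev M.disc_pos.le) _
  have hf : 0 ≤ ∑ s, ∑ a, M.occ π s a * (f s a - Q s a) ^ 2 :=
    sum_nonneg fun s _ => sum_nonneg fun a _ => mul_nonneg (M.occ_nonneg hπ s a) (sq_nonneg _)
  linarith [mul_le_mul_of_nonneg_left hocc hlam.le, mul_nonneg hlam.le hf]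

/-- Fitted policy evaluation offline Bellman residual bound. -/
theorem stmt13 (M : FinMDP S A) (π Q : S → A → ℝ) (hπ : IsPolicy π) (hQ : M.IsQ π Q)
    (ν : S → A → ℝ) (hν0 : ∀ s a, 0 ≤ ν s a) (hν1 : ∑ s, ∑ a, ν s a = 1)
    (lam ε εbe D : ℝ) (hlam : 0 < lam) (hε : 0 ≤ ε)
    (hεbe0 : 0 ≤ εbe) (hεbe1 : εbe ≤ 2 / (1 - M.disc)) (hD : 0 ≤ D)
    (fprev f : S → A → ℝ)
    (hfprevmem : ∀ s a, fprev s a ∈ Set.Icc 0 (1 / (1 - M.disc)))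
    (hfmem : ∀ s a, f s a ∈ Set.Icc 0 (1 / (1 - M.disc)))
    (horacle : ∃ g : S → A → ℝ,
      (∀ s a, g s a ∈ Set.Icc 0 (1 / (1 - M.disc))) ∧
      (∀ s a, |g s a - M.bellman π fprev s a| ≤ εbe) ∧
      ((∑ s, ∑ a, ν s a * (f s a - M.bellman π fprev s a) ^ 2)
          + lam * ∑ s, ∑ a, M.occ π s a * (f s a - Q s a) ^ 2
        ≤ (∑ s, ∑ a, ν s a * (g s a - M.bellman π fprev s a) ^ 2)
          + lam * (∑ s, ∑ a, M.occ π s a * (g s a - Q s a) ^ 2) + ε))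
    (hprev : ∑ s, ∑ a, M.occ π s a * (fprev s a - Q s a) ^ 2 ≤ D) :
    ∑ s, ∑ a, ν s a * (f s a - M.bellman π fprev s a) ^ 2
      ≤ lam * (4 * εbe / (1 - M.disc) + M.disc * D) + 2 * εbe / (1 - M.disc) + ε :=
  stmt13_general M π Q hπ hQ ν hν0 hν1 lam ε εbe D hlam hεbe1 fprev f hfprevmem horacle hprev
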